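/- arXiv:2208.14476 — 5 statements merged into one kernel-verified Lean document; each statement's English description precedes it below -/
import Mathlib

section
/- If qL, q̄, qR are real numbers with qL < q̄ < qR, then the unique parabola p of degree ≤ 2 with p(-Δx/2)=qL, p(Δx/2)=qR and average q̄ over [-Δx/2,Δx/2] is monotone (nondecreasing) on [-Δx/2, Δx/2] if and only if r := (qR - q̄)/(q̄ - qL) ∈ [1/2, 2]. -/
set_option maxHeartbeats 1600000 in
/-- For monotone increasing data `qL < q̄ < qR`, the parabolic reconstruction is
monotone on the cell iff `r = (qR - q̄)/(q̄ - qL) ∈ [1/2, 2]`. -/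
theorem parabola_monotone_iff (Δx qL qR qbar : ℝ) (hΔ : 0 < Δx)
    (h1 : qL < qbar) (h2 : qbar < qR)
    (p : ℝ → ℝ)
    (hp : ∀ x, p x = (6*qbar - qL - qR)/4 + (qR - qL)/Δx * x
        + 3*(qL + qR - 2*qbar)/Δx^2 * x^2) :
    MonotoneOn p (Set.Icc (-(Δx/2)) (Δx/2)) ↔
      (qR - qbar)/(qbar - qL) ∈ Set.Icc (1/2 : ℝ) 2 := by
  have hd : (0:ℝ) < qbar - qL := by linarith
  have hΔne : Δx ≠ 0 := ne_of_gt hΔ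
  have hΔ2 : (0:ℝ) < Δx^2 := by positivity
  rw [Set.mem_Icc, le_div_iff₀ hd, div_le_iff₀ hd]
  constructor
  · intro hm
    constructor
    · -- r ≥ 1/2 : failure would violate monotonicity near the right endpoint
      by_contra hc
      push_neg at hc
      set c : ℝ := qL + qR - 2*qbar with hcdef
      have hcneg : c < 0 := by simp only [hcdef]; linarith
      have hkey : (qR - qL) + 3*c < 0 := by simp only [hcdef]; linarith
      set ε : ℝ := ((qR - qL) + 3*c)*Δx/(6*c) with hε
      have h6c : (6:ℝ)*c ≠ 0 := by nlinarith
      have h6 : ε * (6*c) = ((qR - qL) + 3*c)*Δx := by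
        rw [hε, div_mul_cancel₀ _ h6c]
      have hεpos : 0 < ε := by nlinarith [mul_pos hΔ (neg_pos.mpr hkey)]
      have hεlt : ε < Δx := by nlinarith [mul_pos hΔ (neg_pos.mpr hcneg)]
      have hmem1 : Δx/2 - ε ∈ Set.Icc (-(Δx/2)) (Δx/2) := by
        constructor <;> [linarith; linarith]
      have hmem2 : Δx/2 ∈ Set.Icc (-(Δx/2)) (Δx/2) := by
        constructor <;> linarith
      have hle := hm hmem1 hmem2 (by linarith)
      have key : Δx^2 * (p (Δx/2) - p (Δx/2 - ε))
          = ε * (((qR - qL) + 3*c)*Δx - 3*c*ε) := by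
        rw [hp, hp]; field_simp; ring
      have h8 : 3*c*ε*ε = (((qR - qL) + 3*c)*Δx)*ε/2 := by
        linear_combination (ε/2) * h6
      have h7 : (((qR - qL) + 3*c)*Δx)*ε < 0 :=
        mul_neg_of_neg_of_pos (mul_neg_of_neg_of_pos hkey hΔ) hεpos
      nlinarith [mul_nonneg (le_of_lt hΔ2) (sub_nonneg.mpr hle)]
    · -- r ≤ 2 : failure would violate monotonicity near the left endpoint
      by_contra hc
      push_neg at hc
      set c : ℝ := qL + qR - 2*qbar with hcdef
      have hcpos : 0 < c := by simp only [hcdef]; linarith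
      have hkey : (qR - qL) - 3*c < 0 := by simp only [hcdef]; linarith
      set ε : ℝ := -(((qR - qL) - 3*c)*Δx)/(6*c) with hε
      have h6c : (6:ℝ)*c ≠ 0 := by nlinarith
      have h6 : ε * (6*c) = -(((qR - qL) - 3*c)*Δx) := by
        rw [hε, div_mul_cancel₀ _ h6c]
      have hεpos : 0 < ε := by nlinarith [mul_pos hΔ (neg_pos.mpr hkey)]
      have hεlt : ε < Δx := by nlinarith [mul_pos hΔ hcpos, mul_pos hΔ (show (0:ℝ) < qR - qL by linarith)]
      have hmem1 : -(Δx/2) ∈ Set.Icc (-(Δx/2)) (Δx/2) := by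
        constructor <;> linarith
      have hmem2 : -(Δx/2) + ε ∈ Set.Icc (-(Δx/2)) (Δx/2) := by
        constructor <;> [linarith; linarith]
      have hle := hm hmem1 hmem2 (by linarith)
      have key : Δx^2 * (p (-(Δx/2) + ε) - p (-(Δx/2)))
          = ε * (((qR - qL) - 3*c)*Δx + 3*c*ε) := by
        rw [hp, hp]; field_simp; ring
      have h8 : 3*c*ε*ε = -((((qR - qL) - 3*c)*Δx)*ε)/2 := by
        linear_combination (ε/2) * h6
      have h7 : (((qR - qL) - 3*c)*Δx)*ε < 0 :=
        mul_neg_of_neg_of_pos (mul_neg_of_neg_of_pos hkey hΔ) hεpos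
      nlinarith [mul_nonneg (le_of_lt hΔ2) (sub_nonneg.mpr hle)]
  · rintro ⟨hA, hB⟩ x hx y hy hxy
    obtain ⟨hx1, hx2⟩ := hx
    obtain ⟨hy1, hy2⟩ := hy
    have key : Δx^2 * (p y - p x)
        = (y - x) * ((2*(qR - qbar) - (qbar - qL))*(Δx + (x + y))
            + (2*(qbar - qL) - (qR - qbar))*(Δx - (x + y))) := by
      rw [hp, hp]; field_simp; ring
    have t1 : 0 ≤ (y - x) * ((2*(qR - qbar) - (qbar - qL))*(Δx + (x + y))) := by
      apply mul_nonneg (by linarith)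
      apply mul_nonneg (by linarith) (by linarith)
    have t2 : 0 ≤ (y - x) * ((2*(qbar - qL) - (qR - qbar))*(Δx - (x + y))) := by
      apply mul_nonneg (by linarith)
      apply mul_nonneg (by linarith) (by linarith)
    nlinarith [key, t1, t2]
end

section
/- If qL < q̄ < qR and r = (qR - q̄)/(q̄ - qL), then the power-law reconstruction p₁(x) = qL + (qR - qL)·((x + Δx/2)/Δx)^r is monotone increasing on [-Δx/2, Δx/2], and if r = 2 it coincides with the parabolic reconstruction through the same data. -/
/-- The power-law reconstruction is monotone increasing on the cell, and for
`r = 2` it coincides with the parabolic reconstruction. -/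
theorem power_law_monotone (Δx qL qR qbar : ℝ) (hΔ : 0 < Δx)
    (h1 : qL < qbar) (h2 : qbar < qR)
    (r : ℝ) (hr : r = (qR - qbar)/(qbar - qL))
    (p₁ : ℝ → ℝ)
    (hp : ∀ x, p₁ x = qL + (qR - qL) * ((x + Δx/2)/Δx) ^ r)
    (p : ℝ → ℝ)
    (hpar : ∀ x, p x = (6*qbar - qL - qR)/4 + (qR - qL)/Δx * x
        + 3*(qL + qR - 2*qbar)/Δx^2 * x^2) :
    StrictMonoOn p₁ (Set.Icc (-(Δx/2)) (Δx/2)) ∧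
      (r = 2 → ∀ x ∈ Set.Icc (-(Δx/2)) (Δx/2), p₁ x = p x) := by
  have hq : 0 < qR - qL := by linarith
  have hrpos : 0 < r := by
    rw [hr]; exact div_pos (by linarith) (by linarith)
  constructor
  · intro a ha b hb hab
    rw [hp, hp]
    have h0a : 0 ≤ (a + Δx/2)/Δx :=
      div_nonneg (by linarith [ha.1]) hΔ.le
    have hlt : (a + Δx/2)/Δx < (b + Δx/2)/Δx := by gcongr
    have := Real.rpow_lt_rpow h0a hlt hrpos
    nlinarith
  · intro hr2 x hx
    rw [hp, hpar, hr2]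
    have hqb : qR - qbar = 2 * (qbar - qL) := by
      have h : qbar - qL ≠ 0 := by linarith
      field_simp at hr
      rw [hr2] at hr; linarith
    rw [Real.rpow_two]
    have hΔ' : Δx ≠ 0 := ne_of_gt hΔ
    have hqb' : qbar = (qR + 2*qL)/3 := by linarith
    rw [hqb']
    field_simp
    ring
end

section
/- For every polynomial p of degree at most 3 and any parameter a₄ ∈ ℝ, the finite difference formula FD4a is exact at x: [((2+a₄)/4)·p(x-Δx) + (-2 - 3a₄/4)·p̄₋ + a₄·p(x) + (2 - 3a₄/4)·p̄₊ + ((-2+a₄)/4)·p(x+Δx)] / Δx = p'(x), where p̄₋ = (1/Δx)∫_{x-Δx}^{x} p and p̄₊ = (1/Δx)∫_{x}^{x+Δx} p. -/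
open Polynomial intervalIntegral

theorem Polynomial.eq_cubic_of_natDegree_le_three {R : Type*} [Semiring R] {p : R[X]}
    (hp : p.natDegree ≤ 3) :
    p = C (p.coeff 0) + C (p.coeff 1) * X + C (p.coeff 2) * X ^ 2 + C (p.coeff 3) * X ^ 3 := by
  conv_lhs => rw [p.as_sum_range_C_mul_X_pow' (Nat.lt_succ_of_le hp)]
  simp [Finset.sum_range_succ]

theorem integral_cubic (c₀ c₁ c₂ c₃ u v : ℝ) :
    ∫ t in u..v, (c₀ + c₁ * t + c₂ * t ^ 2 + c₃ * t ^ 3)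
      = c₀ * (v - u) + c₁ * (v ^ 2 - u ^ 2) / 2 + c₂ * (v ^ 3 - u ^ 3) / 3
        + c₃ * (v ^ 4 - u ^ 4) / 4 := by
  have hint : ∀ f : ℝ → ℝ, Continuous f → IntervalIntegrable f MeasureTheory.volume u v :=
    fun f hf => hf.intervalIntegrable u v
  simp (disch := exact hint _ (by fun_prop)) only [integral_add, integral_const_mul, integral_pow,
    integral_const, smul_eq_mul]
  rw [integral_const_mul, integral_id]
  ring

/-- FD4a is exact on `P³` for every value of the parameter `a₄`. -/
theorem FD4a_exact (Δx : ℝ) (hΔ : 0 < Δx) (a : ℝ)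
    (p : Polynomial ℝ) (hp : p.natDegree ≤ 3) (x : ℝ) :
    (((2 + a)/4) * p.eval (x - Δx)
        + (-2 - 3*a/4) * ((1/Δx) * ∫ t in (x - Δx)..x, p.eval t)
        + a * p.eval x
        + (2 - 3*a/4) * ((1/Δx) * ∫ t in x..(x + Δx), p.eval t)
        + ((-2 + a)/4) * p.eval (x + Δx)) / Δx
      = (Polynomial.derivative p).eval x := by
  rw [eq_cubic_of_natDegree_le_three hp]
  simp only [eval_add, eval_mul, eval_C, eval_X, eval_pow, derivative_add, derivative_mul,
    derivative_C, derivative_X, derivative_X_pow, eval_zero, eval_one, integral_cubic]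
  field_simp [hΔ.ne']
  ring
end

section
/- The finite difference MD5 is exact on quartics: for every polynomial p of degree at most 4, (4·p(-Δx/2) + 15·q⁽⁰⁾ − 15·q⁽¹⁾ − 35·q⁽²⁾ + 16·p(Δx/2))/Δx = p'(Δx/2), where q⁽ᵖ⁾ = A_p ∫_{-Δx/2}^{Δx/2} x^p p(x) dx with A_p = (p+1)2^p/Δx^{p+1}. -/
lemma eval_expand (p : Polynomial ℝ) (hp : p.natDegree ≤ 4) (x : ℝ) :
    p.eval x = p.coeff 0 + p.coeff 1 * x + p.coeff 2 * x^2 + p.coeff 3 * x^3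
      + p.coeff 4 * x^4 := by
  have h5 : p.natDegree < 5 := lt_of_le_of_lt hp (by norm_num)
  rw [Polynomial.eval_eq_sum_range' h5]
  simp only [Finset.sum_range_succ, Finset.sum_range_zero]
  ring

lemma int_expand (p : Polynomial ℝ) (hp : p.natDegree ≤ 4) (k : ℕ) (a b : ℝ) :
    ∫ x in a..b, x^k * p.eval x
      = p.coeff 0 * ((b^(k+1) - a^(k+1))/(k+1))
      + p.coeff 1 * ((b^(k+2) - a^(k+2))/(k+2))
      + p.coeff 2 * ((b^(k+3) - a^(k+3))/(k+3))
      + p.coeff 3 * ((b^(k+4) - a^(k+4))/(k+4))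
      + p.coeff 4 * ((b^(k+5) - a^(k+5))/(k+5)) := by
  have : ∀ x : ℝ, x^k * p.eval x
      = p.coeff 0 * x^k + p.coeff 1 * x^(k+1) + p.coeff 2 * x^(k+2)
        + p.coeff 3 * x^(k+3) + p.coeff 4 * x^(k+4) := by
    intro x
    rw [eval_expand p hp]
    ring
  simp only [this]
  rw [intervalIntegral.integral_add, intervalIntegral.integral_add,
    intervalIntegral.integral_add, intervalIntegral.integral_add]
  · simp only [intervalIntegral.integral_const_mul, integral_pow]
    push_cast
    ring
  all_goals exact Continuous.intervalIntegrable (by fun_prop) _ _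

/-- MD5 is exact on quartic polynomials. -/
theorem MD5_exact (Δx : ℝ) (hΔ : 0 < Δx)
    (p : Polynomial ℝ) (hp : p.natDegree ≤ 4)
    (q0 q1 q2 : ℝ)
    (hq0 : q0 = (1 * 2^0 / Δx^1) * ∫ x in (-(Δx/2))..(Δx/2), x^0 * p.eval x)
    (hq1 : q1 = (2 * 2^1 / Δx^2) * ∫ x in (-(Δx/2))..(Δx/2), x^1 * p.eval x)
    (hq2 : q2 = (3 * 2^2 / Δx^3) * ∫ x in (-(Δx/2))..(Δx/2), x^2 * p.eval x) :
    (4 * p.eval (-(Δx/2)) + 15 * q0 - 15 * q1 - 35 * q2 + 16 * p.eval (Δx/2)) / Δx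
      = (Polynomial.derivative p).eval (Δx/2) := by
  have hd : (Polynomial.derivative p).eval (Δx/2)
      = p.coeff 1 + 2 * p.coeff 2 * (Δx/2) + 3 * p.coeff 3 * (Δx/2)^2
        + 4 * p.coeff 4 * (Δx/2)^3 := by
    have hdeg : (Polynomial.derivative p).natDegree ≤ 4 :=
      le_trans (Polynomial.natDegree_derivative_le p) (le_trans (Nat.sub_le _ _) hp)
    rw [eval_expand _ hdeg]
    have h5c : p.coeff 5 = 0 := Polynomial.coeff_eq_zero_of_natDegree_lt (by omega)
    have h4 : (Polynomial.derivative p).coeff 4 = 0 := by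
      simp [Polynomial.coeff_derivative, h5c]
    simp only [Polynomial.coeff_derivative, h4]
    push_cast
    ring
  rw [hq0, hq1, hq2, int_expand p hp, int_expand p hp, int_expand p hp,
    eval_expand p hp, eval_expand p hp, hd]
  have h2 : Δx ≠ 0 := ne_of_gt hΔ
  field_simp
  ring
end

section
/- Let f(z) = Σ a_j z^j ∈ ℂ[z] of degree n ≥ 1 with f(0) ≠ 0, f*(z) = Σ conj(a_{n-j}) z^j, and f₁(z) = (f*(0)f(z) − f(0)f*(z))/z. If |f*(0)| > |f(0)| and all zeros of f₁ lie in the closed unit disc (or f₁ is a nonzero constant), then all zeros of f lie in the closed unit disc. -/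
open Polynomial ComplexConjugate

/-! Write `p^*` for the conjugate reflection of `p` at degree `N = deg f`, so that `fstar = f^*`,
and put `g = f^*(0) f - f(0) f^* = X f₁`. Reflection is conjugate-linear and involutive, so
`g^* = conj (f^*(0)) f^* - conj (f(0)) f`, and `g` has exact degree `N` because its coefficient
of `X^N` is `|f^*(0)|² - |f(0)|² ≠ 0`. As all zeros of `g` lie in the closed unit disc, factoring
`g` into linear factors gives `|g^*(z)| ≤ |g(z)|` for `|z| ≥ 1`. At a zero `z` of `f` with
`|z| > 1` this reads `|f^*(0)| |f^*(z)| ≤ |f(0)| |f^*(z)|`, so `f^*(z) = 0`; then `g(z) = 0`,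
whence `|z| ≤ 1`. -/

noncomputable def conjReflect (N : ℕ) (p : ℂ[X]) : ℂ[X] := reflect N (p.map (starRingEnd ℂ))

theorem conjReflect_natDegree (p : ℂ[X]) :
    conjReflect p.natDegree p = (p.map (starRingEnd ℂ)).reverse := by
  rw [reverse, natDegree_map, conjReflect]

theorem conjReflect_conjReflect (N : ℕ) (p : ℂ[X]) : conjReflect N (conjReflect N p) = p := by
  simp [conjReflect, ← reflect_map, Polynomial.map_map]

theorem conjReflect_sub (N : ℕ) (p q : ℂ[X]) :
    conjReflect N (p - q) = conjReflect N p - conjReflect N q := by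
  rw [conjReflect, Polynomial.map_sub, reflect_sub, conjReflect, conjReflect]

theorem conjReflect_C_mul (N : ℕ) (a : ℂ) (p : ℂ[X]) :
    conjReflect N (C a * p) = C (conj a) * conjReflect N p := by
  rw [conjReflect, Polynomial.map_mul, map_C, reflect_C_mul, conjReflect]

theorem coeff_conjReflect {N k : ℕ} (hk : k ≤ N) (p : ℂ[X]) :
    (conjReflect N p).coeff k = conj (p.coeff (N - k)) := by
  rw [conjReflect, coeff_reflect, revAt_le hk, coeff_map]

theorem natDegree_conjReflect_le {N : ℕ} {p : ℂ[X]} (hp : p.natDegree ≤ N) :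
    (conjReflect N p).natDegree ≤ N :=
  natDegree_reflect_le.trans (max_le le_rfl (by rwa [natDegree_map]))

theorem reverse_X_sub_C {R : Type*} [Ring R] [Nontrivial R] (s : R) :
    (X - C s).reverse = 1 - C s * X := by
  have hX : (X : R[X]).reverse = 1 := by
    rw [← one_mul X, reverse_mul_X, ← C_1, reverse_C]
  rw [sub_eq_add_neg, ← C_neg, reverse_add_C, hX]
  simp [sub_eq_add_neg]

theorem norm_one_sub_conj_mul_le_norm_sub {r z : ℂ} (hr : ‖r‖ ≤ 1) (hz : 1 ≤ ‖z‖) :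
    ‖1 - conj r * z‖ ≤ ‖z - r‖ := by
  have hr2 : Complex.normSq r ≤ 1 := by
    rw [Complex.normSq_eq_norm_sq]; nlinarith [norm_nonneg r]
  have hz2 : 1 ≤ Complex.normSq z := by
    rw [Complex.normSq_eq_norm_sq]; nlinarith
  have hdiff : Complex.normSq (z - r) - Complex.normSq (1 - conj r * z)
      = (Complex.normSq z - 1) * (1 - Complex.normSq r) := by
    simp only [Complex.normSq_apply, Complex.sub_re, Complex.sub_im, Complex.mul_re,
      Complex.mul_im, Complex.one_re, Complex.one_im, Complex.conj_re, Complex.conj_im]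
    ring
  have hsq : Complex.normSq (1 - conj r * z) ≤ Complex.normSq (z - r) := by
    nlinarith [mul_nonneg (sub_nonneg.mpr hz2) (sub_nonneg.mpr hr2)]
  simpa [Complex.norm_def] using Real.sqrt_le_sqrt hsq

theorem norm_eval_reverse_map_conj_le {p : ℂ[X]} (hp : ∀ r, p.eval r = 0 → ‖r‖ ≤ 1) {z : ℂ}
    (hz : 1 ≤ ‖z‖) : ‖((p.map (starRingEnd ℂ)).reverse).eval z‖ ≤ ‖p.eval z‖ := by
  set Q : ℂ[X] → Prop := fun q ↦ ‖((q.map (starRingEnd ℂ)).reverse).eval z‖ ≤ ‖q.eval z‖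
  have hmul : ∀ q₁ q₂, Q q₁ → Q q₂ → Q (q₁ * q₂) := fun q₁ q₂ h₁ h₂ ↦ by
    simp only [Q, Polynomial.map_mul, reverse_mul_of_domain, eval_mul, norm_mul]
    exact mul_le_mul h₁ h₂ (norm_nonneg _) (norm_nonneg _)
  have hC : ∀ c, Q (C c) := fun c ↦ by simp [Q]
  have hlinear : ∀ r ∈ p.roots, Q (X - C r) := fun r hr ↦ by
    simp only [Q, Polynomial.map_sub, map_X, map_C, reverse_X_sub_C, eval_sub, eval_one,
      eval_mul, eval_C, eval_X]
    exact norm_one_sub_conj_mul_le_norm_sub (hp r (isRoot_of_mem_roots hr)) hz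
  rw [← C_leadingCoeff_mul_prod_multiset_X_sub_C (IsAlgClosed.card_roots_eq_natDegree (p := p))]
  refine hmul _ _ (hC _) (Multiset.prod_induction Q _ hmul (by simpa using hC 1) ?_)
  intro q hq
  obtain ⟨r, hr, rfl⟩ := Multiset.mem_map.mp hq
  exact hlinear r hr

theorem natDegree_schurTransform {f : ℂ[X]} {N : ℕ} (hf : f.natDegree ≤ N)
    (hcoeff : ‖f.coeff 0‖ < ‖f.coeff N‖) :
    (C (conj (f.coeff N)) * f - C (f.coeff 0) * conjReflect N f).natDegree = N := by
  refine natDegree_eq_of_le_of_coeff_ne_zero ?_ ?_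
  · exact (natDegree_sub_le _ _).trans <| max_le (natDegree_C_mul_le _ _ |>.trans hf)
      (natDegree_C_mul_le _ _ |>.trans (natDegree_conjReflect_le hf))
  · rw [coeff_sub, coeff_C_mul, coeff_C_mul, coeff_conjReflect le_rfl, Nat.sub_self,
      mul_comm, Complex.mul_conj, Complex.mul_conj, sub_ne_zero, Ne, Complex.ofReal_inj,
      Complex.normSq_eq_norm_sq, Complex.normSq_eq_norm_sq]
    nlinarith [norm_nonneg (f.coeff 0)]

theorem norm_le_one_of_eval_eq_zero_of_schurTransform {f : ℂ[X]} {N : ℕ} {α β : ℂ}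
    (hβα : ‖β‖ < ‖α‖) (hdeg : (C α * f - C β * conjReflect N f).natDegree = N)
    (hroots : ∀ r, (C α * f - C β * conjReflect N f).eval r = 0 → ‖r‖ ≤ 1)
    {z : ℂ} (hz : f.eval z = 0) : ‖z‖ ≤ 1 := by
  set g := C α * f - C β * conjReflect N f
  by_contra! hz1
  have hg_conjReflect : conjReflect N g = C (conj α) * conjReflect N f - C (conj β) * f := by
    rw [conjReflect_sub, conjReflect_C_mul, conjReflect_C_mul, conjReflect_conjReflect]
  have hle := norm_eval_reverse_map_conj_le hroots hz1.le
  rw [← conjReflect_natDegree, hdeg, hg_conjReflect] at hle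
  simp only [g, eval_sub, eval_mul, eval_C, hz, mul_zero, zero_sub, sub_zero, norm_neg, norm_mul,
    Complex.norm_conj] at hle
  have hstar_z : (conjReflect N f).eval z = 0 := by
    by_contra hne
    exact hβα.not_ge (le_of_mul_le_mul_right hle (norm_pos_iff.mpr hne))
  refine hz1.not_ge (hroots z ?_)
  simp [g, hz, hstar_z]

theorem schur_cohn_general (f : Polynomial ℂ)
    (fstar : Polynomial ℂ) (hstar : fstar = (f.map (starRingEnd ℂ)).reverse)
    (f₁ : Polynomial ℂ)
    (hf₁ : Polynomial.X * f₁ = Polynomial.C (fstar.eval 0) * f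
        - Polynomial.C (f.eval 0) * fstar)
    (habs : ‖f.eval 0‖ < ‖fstar.eval 0‖)
    (hroots : (∀ z : ℂ, f₁.eval z = 0 → ‖z‖ ≤ 1) ∨ f₁.degree = 0) :
    ∀ z : ℂ, f.eval z = 0 → ‖z‖ ≤ 1 := by
  have hfstar : fstar = conjReflect f.natDegree f := by rw [hstar, conjReflect_natDegree]
  have hfstar_zero : fstar.eval 0 = conj (f.coeff f.natDegree) := by
    rw [← coeff_zero_eq_eval_zero, hfstar, coeff_conjReflect (Nat.zero_le _), Nat.sub_zero]
  rw [hfstar_zero, ← coeff_zero_eq_eval_zero, hfstar] at hf₁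
  rw [hfstar_zero, ← coeff_zero_eq_eval_zero] at habs
  have hf₁_roots : ∀ r, f₁.eval r = 0 → ‖r‖ ≤ 1 := by
    rcases hroots with hroots | hdeg
    · exact hroots
    · intro r hr
      have hf₁_ne : f₁ ≠ 0 := by rintro rfl; simp at hdeg
      exact absurd hdeg (degree_pos_of_root hf₁_ne hr).ne'
  intro z hz
  refine norm_le_one_of_eval_eq_zero_of_schurTransform (N := f.natDegree) habs ?_ ?_ hz
  · exact natDegree_schurTransform le_rfl (by rwa [Complex.norm_conj] at habs)
  · intro r hr
    rw [← hf₁, eval_mul, eval_X, mul_eq_zero] at hr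
    rcases hr with rfl | hr
    · simp
    · exact hf₁_roots r hr

/-- One direction of the Schur–Cohn criterion: if `|f*(0)| > |f(0)|` and all
zeros of `f₁` lie in the closed unit disc (or `f₁` is a nonzero constant), then
all zeros of `f` lie in the closed unit disc. -/
theorem schur_cohn (f : Polynomial ℂ) (hdeg : 1 ≤ f.natDegree)
    (h0 : f.eval 0 ≠ 0)
    (fstar : Polynomial ℂ) (hstar : fstar = (f.map (starRingEnd ℂ)).reverse)
    (f₁ : Polynomial ℂ)
    (hf₁ : Polynomial.X * f₁ = Polynomial.C (fstar.eval 0) * f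
        - Polynomial.C (f.eval 0) * fstar)
    (habs : ‖f.eval 0‖ < ‖fstar.eval 0‖)
    (hroots : (∀ z : ℂ, f₁.eval z = 0 → ‖z‖ ≤ 1) ∨ f₁.degree = 0) :
    ∀ z : ℂ, f.eval z = 0 → ‖z‖ ≤ 1 :=
  schur_cohn_general f fstar hstar f₁ hf₁ habs hroots
end
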